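/- Let μ be a Radon measure on Z × Z possessing a diagonal concentration μ_∞ (i.e. μ_β is finite for all β > β* and μ_β converges weakly to the finite measure μ_∞ as β → +∞). Let ν be a finite measure on Z × Z such that ν((Z × Z) \ diag(Z × Z)) = 0 and ∫_{Z×Z} f(y) dν(y,z) = ∫_{Z×Z} f(y) dμ_∞(y,z) for all bounded continuous functions f : Z → ℝ. Then ν = μ_∞. -/
import Mathlib


open MeasureTheory Filter Topology

noncomputable section

/-- Phase space `Z = ℝ^{2N}` with its Euclidean (inner-product) norm. -/
abbrev Zsp (N : ℕ) : Type := EuclideanSpace ℝ (Fin (2 * N))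

/-- Normalization constant `B_β = ∫_Z exp (−β ‖ξ‖²) dξ`. -/
def Bconst (N : ℕ) (β : ℝ) : ℝ := ∫ ξ : Zsp N, Real.exp (-β * ‖ξ‖ ^ 2)

/-- Thermalized measure `μ_β = w_β · μ` with density `w_β(y,z) = B_β⁻¹ exp (−β ‖y − z‖²)`. -/
def thermal {N : ℕ} (μ : Measure (Zsp N × Zsp N)) (β : ℝ) : Measure (Zsp N × Zsp N) :=
  μ.withDensity fun p => ENNReal.ofReal ((Bconst N β)⁻¹ * Real.exp (-β * ‖p.1 - p.2‖ ^ 2))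

lemma Bconst_eq (N : ℕ) {β : ℝ} (hβ : 0 < β) :
    Bconst N β = (Real.pi / β) ^ N := by
  rw [Bconst]
  have h := GaussianFourier.integral_rexp_neg_mul_sq_norm (V := Zsp N) hβ
  rw [h, finrank_euclideanSpace, Fintype.card_fin]
  have : ((2 * N : ℕ) : ℝ) / 2 = (N : ℝ) := by push_cast; ring
  rw [this, Real.rpow_natCast]

lemma density_bound (N : ℕ) {β β₀ r d : ℝ} (hβ₀ : 0 < β₀) (hβ : β₀ ≤ β)
    (hr : 0 ≤ r) (hd : r ≤ d) :
    (Bconst N β)⁻¹ * Real.exp (-β * d ^ 2) ≤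
      ((β / β₀) ^ N * Real.exp (-(β - β₀) * r ^ 2)) *
        ((Bconst N β₀)⁻¹ * Real.exp (-β₀ * d ^ 2)) := by
  have hβpos : 0 < β := lt_of_lt_of_le hβ₀ hβ
  rw [Bconst_eq N hβpos, Bconst_eq N hβ₀, ← inv_pow, ← inv_pow, inv_div, inv_div]
  have hmul : (β / β₀) ^ N * ((β₀ / Real.pi) ^ N) = (β / Real.pi) ^ N := by
    rw [← mul_pow]
    congr 1
    field_simp
  have hexp : Real.exp (-β * d ^ 2) ≤
      Real.exp (-(β - β₀) * r ^ 2) * Real.exp (-β₀ * d ^ 2) := by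
    rw [← Real.exp_add]
    apply Real.exp_le_exp.mpr
    nlinarith [mul_le_mul_of_nonneg_left (pow_le_pow_left₀ hr hd 2) (sub_nonneg.2 hβ),
      sq_nonneg r, sq_nonneg d]
  calc (β / Real.pi) ^ N * Real.exp (-β * d ^ 2)
      ≤ (β / Real.pi) ^ N * (Real.exp (-(β - β₀) * r ^ 2) * Real.exp (-β₀ * d ^ 2)) := by
        apply mul_le_mul_of_nonneg_left hexp (by positivity)
    _ = (β / β₀) ^ N * Real.exp (-(β - β₀) * r ^ 2) *
        ((β₀ / Real.pi) ^ N * Real.exp (-β₀ * d ^ 2)) := by rw [← hmul]; ring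

lemma thermal_set_bound {N : ℕ} (μ : Measure (Zsp N × Zsp N)) {β β₀ r : ℝ}
    (hβ₀ : 0 < β₀) (hβ : β₀ ≤ β) (hr : 0 ≤ r) :
    thermal μ β {p : Zsp N × Zsp N | r ≤ ‖p.1 - p.2‖} ≤
      ENNReal.ofReal ((β / β₀) ^ N * Real.exp (-(β - β₀) * r ^ 2)) *
        thermal μ β₀ Set.univ := by
  have hβpos : 0 < β := lt_of_lt_of_le hβ₀ hβ
  set F : Set (Zsp N × Zsp N) := {p | r ≤ ‖p.1 - p.2‖} with hF_def
  have hF : MeasurableSet F :=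
    (isClosed_le continuous_const ((continuous_fst.sub continuous_snd).norm)).measurableSet
  set c : ℝ := (β / β₀) ^ N * Real.exp (-(β - β₀) * r ^ 2) with hc_def
  have hc : 0 ≤ c := by positivity
  rw [thermal, withDensity_apply _ hF]
  have step1 : ∫⁻ p in F, ENNReal.ofReal ((Bconst N β)⁻¹ * Real.exp (-β * ‖p.1 - p.2‖ ^ 2)) ∂μ
      ≤ ∫⁻ p in F, ENNReal.ofReal c *
          ENNReal.ofReal ((Bconst N β₀)⁻¹ * Real.exp (-β₀ * ‖p.1 - p.2‖ ^ 2)) ∂μ := by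
    apply setLIntegral_mono' hF
    intro p hp
    rw [← ENNReal.ofReal_mul hc]
    exact ENNReal.ofReal_le_ofReal (density_bound N hβ₀ hβ hr hp)
  refine le_trans step1 ?_
  rw [lintegral_const_mul' _ _ ENNReal.ofReal_ne_top]
  apply mul_le_mul_right
  rw [thermal, ← withDensity_apply _ hF]
  exact measure_mono (Set.subset_univ F)

lemma diag_rep {N : ℕ} (ρ : Measure (Zsp N × Zsp N))
    (h : ρ {p : Zsp N × Zsp N | p.1 ≠ p.2} = 0) :
    ρ = (ρ.map Prod.fst).map (fun y => (y, y)) := by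
  have hδ : Measurable (fun y : Zsp N => (y, y)) := measurable_id.prodMk measurable_id
  ext s hs
  rw [Measure.map_apply hδ hs, Measure.map_apply measurable_fst (hδ hs)]
  apply measure_congr
  have hae : ∀ᵐ p : Zsp N × Zsp N ∂ρ, p.1 = p.2 := by
    rw [ae_iff]; exact h
  filter_upwards [hae] with p hp
  have hp' : (p.1, p.1) = p := Prod.ext rfl hp
  show (p ∈ s) = (p ∈ Prod.fst ⁻¹' ((fun y => (y, y)) ⁻¹' s))
  simp only [Set.mem_preimage, hp']

/-- **Lemma (uniqueness of the diagonal concentration from univariate test functions).**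
If `μ∞` is the diagonal concentration of `μ` and `ν` is a finite measure concentrated on the
diagonal with `∫ f(y) dν(y,z) = ∫ f(y) dμ∞(y,z)` for all bounded continuous `f : Z → ℝ`,
then `ν = μ∞`. -/
theorem diagonalConcentration_unique
    {N : ℕ} (hN : 0 < N)
    (μ : Measure (Zsp N × Zsp N)) [IsLocallyFiniteMeasure μ]
    (βstar : ℝ) (hβstar : 0 ≤ βstar)
    (hfin : ∀ β > βstar, IsFiniteMeasure (thermal μ β))
    (μinf : Measure (Zsp N × Zsp N)) [IsFiniteMeasure μinf]
    (hconv : ∀ f : BoundedContinuousFunction (Zsp N × Zsp N) ℝ,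
      Filter.Tendsto (fun β : ℝ => ∫ p, f p ∂(thermal μ β)) Filter.atTop
        (nhds (∫ p, f p ∂μinf)))
    (ν : Measure (Zsp N × Zsp N)) [IsFiniteMeasure ν]
    (hνdiag : ν {p : Zsp N × Zsp N | p.1 ≠ p.2} = 0)
    (hνtest : ∀ f : BoundedContinuousFunction (Zsp N) ℝ,
      ∫ p : Zsp N × Zsp N, f p.1 ∂ν = ∫ p : Zsp N × Zsp N, f p.1 ∂μinf) :
    ν = μinf := by
  -- Step 1: μinf is concentrated on the diagonal
  set β₀ : ℝ := βstar + 1 with hβ₀def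
  have hβ₀pos : 0 < β₀ := by linarith
  have hβ₀gt : βstar < β₀ := by linarith
  haveI hfin₀ : IsFiniteMeasure (thermal μ β₀) := hfin β₀ hβ₀gt
  set Ctot : ℝ := (thermal μ β₀ Set.univ).toReal with hCtot
  have hCnn : 0 ≤ Ctot := ENNReal.toReal_nonneg
  have hkey : ∀ ε : ℝ, 0 < ε → μinf {p : Zsp N × Zsp N | ε ≤ ‖p.1 - p.2‖} = 0 := by
    intro ε hε
    set r : ℝ := ε / 2 with hr_def
    have hrpos : 0 < r := by positivity
    -- test function
    set φ : (Zsp N × Zsp N) → ℝ := fun p => min 1 (max 0 (2 / ε * ‖p.1 - p.2‖ - 1)) with hφdef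
    have hφcont : Continuous φ := by
      apply Continuous.min continuous_const
      apply Continuous.max continuous_const
      exact (continuous_const.mul ((continuous_fst.sub continuous_snd).norm)).sub
        continuous_const
    have hφ0 : ∀ p, 0 ≤ φ p := fun p => le_min zero_le_one (le_max_left _ _)
    have hφ1 : ∀ p, φ p ≤ 1 := fun p => min_le_left _ _
    set g : BoundedContinuousFunction (Zsp N × Zsp N) ℝ :=
      BoundedContinuousFunction.mkOfBound ⟨φ, hφcont⟩ 1
        (fun x y => by
          rw [Real.dist_eq, abs_sub_le_iff]
          constructor <;> [skip; skip] <;>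
          · have := hφ0 x; have := hφ1 x; have := hφ0 y; have := hφ1 y
            simp only [ContinuousMap.coe_mk]
            linarith) with hgdef
    have hgφ : ∀ p, g p = φ p := fun p => rfl
    -- g vanishes off F, and dominates the indicator of S
    set F : Set (Zsp N × Zsp N) := {p | r ≤ ‖p.1 - p.2‖} with hFdef
    have hF : MeasurableSet F :=
      (isClosed_le continuous_const ((continuous_fst.sub continuous_snd).norm)).measurableSet
    set S : Set (Zsp N × Zsp N) := {p | ε ≤ ‖p.1 - p.2‖} with hSdef
    have hS : MeasurableSet S :=
      (isClosed_le continuous_const ((continuous_fst.sub continuous_snd).norm)).measurableSet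
    have hφ_zero : ∀ p, p ∉ F → φ p = 0 := by
      intro p hp
      have hd : ‖p.1 - p.2‖ < r := not_le.mp hp
      have : 2 / ε * ‖p.1 - p.2‖ - 1 ≤ 0 := by
        have h2 : 2 / ε * ‖p.1 - p.2‖ ≤ 2 / ε * r := by
          apply mul_le_mul_of_nonneg_left hd.le (by positivity)
        have h3 : 2 / ε * r = 1 := by rw [hr_def]; field_simp
        linarith
      simp only [hφdef, max_eq_left this, min_eq_right (zero_le_one)]
    have hφ_one : ∀ p, p ∈ S → φ p = 1 := by
      intro p hp
      have hd : ε ≤ ‖p.1 - p.2‖ := hp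
      have : (1 : ℝ) ≤ 2 / ε * ‖p.1 - p.2‖ - 1 := by
        have h2 : 2 / ε * ε ≤ 2 / ε * ‖p.1 - p.2‖ :=
          mul_le_mul_of_nonneg_left hd (by positivity)
        have h3 : 2 / ε * ε = 2 := by field_simp
        linarith
      simp only [hφdef, max_eq_right (le_trans zero_le_one this), min_eq_left this]
    -- bound on the integral of g against thermal measures
    set bnd : ℝ → ℝ :=
      fun β => (β / β₀) ^ N * Real.exp (-(β - β₀) * r ^ 2) * Ctot with hbnd
    have hA : ∀ β : ℝ, β₀ ≤ β → ∫ p, g p ∂(thermal μ β) ≤ bnd β := by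
      intro β hβ
      haveI := hfin β (lt_of_lt_of_le hβ₀gt hβ)
      have hle : ∀ p, g p ≤ Set.indicator F (fun _ => (1 : ℝ)) p := by
        intro p
        by_cases hp : p ∈ F
        · rw [Set.indicator_of_mem hp]; exact hφ1 p
        · rw [Set.indicator_of_notMem hp, hgφ, hφ_zero p hp]
      have h1 : ∫ p, g p ∂(thermal μ β) ≤ ∫ p, Set.indicator F (fun _ => (1:ℝ)) p ∂(thermal μ β) :=
        integral_mono (g.integrable _) ((integrable_const (1:ℝ)).indicator hF) hle
      rw [integral_indicator_const (1 : ℝ) hF, smul_eq_mul, mul_one] at h1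
      refine h1.trans ?_
      have h2 := thermal_set_bound μ hβ₀pos hβ hrpos.le
      have hne : ENNReal.ofReal ((β / β₀) ^ N * Real.exp (-(β - β₀) * r ^ 2)) *
          thermal μ β₀ Set.univ ≠ ⊤ :=
        ENNReal.mul_ne_top ENNReal.ofReal_ne_top (measure_ne_top _ _)
      have h3 := ENNReal.toReal_mono hne h2
      rw [ENNReal.toReal_mul, ENNReal.toReal_ofReal
        (mul_nonneg (pow_nonneg (div_nonneg (le_trans hβ₀pos.le hβ) hβ₀pos.le) N)
          (Real.exp_nonneg _))] at h3
      exact h3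
    -- the bound tends to zero
    have hB : Tendsto bnd atTop (nhds 0) := by
      have hr2 : 0 < r ^ 2 := by positivity
      have key := tendsto_rpow_mul_exp_neg_mul_atTop_nhds_zero (N : ℝ) (r ^ 2) hr2
      simp only [Real.rpow_natCast] at key
      have key2 := key.const_mul (((β₀ ^ N)⁻¹ * Real.exp (β₀ * r ^ 2)) * Ctot)
      rw [mul_zero] at key2
      apply key2.congr
      intro β
      have hexp : Real.exp (-(β - β₀) * r ^ 2) = Real.exp (β₀ * r ^ 2) * Real.exp (-r ^ 2 * β) := by
        rw [← Real.exp_add]; congr 1; ring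
      simp only [hbnd, hexp, div_pow]
      ring
    -- conclude ∫ g dμinf = 0
    have hsq : Tendsto (fun β => ∫ p, g p ∂(thermal μ β)) atTop (nhds 0) := by
      apply tendsto_of_tendsto_of_tendsto_of_le_of_le' tendsto_const_nhds hB
      · exact Eventually.of_forall fun β => integral_nonneg fun p => hφ0 p
      · filter_upwards [eventually_ge_atTop β₀] with β hβ using hA β hβ
    have hint0 : ∫ p, g p ∂μinf = 0 := tendsto_nhds_unique (hconv g) hsq
    -- hence μinf S = 0
    have hind : ∀ p, Set.indicator S (fun _ => (1 : ℝ)) p ≤ g p := by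
      intro p
      by_cases hp : p ∈ S
      · rw [Set.indicator_of_mem hp, hgφ, hφ_one p hp]
      · rw [Set.indicator_of_notMem hp]; exact hφ0 p
    have h4 : ∫ p, Set.indicator S (fun _ => (1:ℝ)) p ∂μinf ≤ ∫ p, g p ∂μinf :=
      integral_mono ((integrable_const (1:ℝ)).indicator hS) (g.integrable _) hind
    rw [integral_indicator_const (1 : ℝ) hS, smul_eq_mul, mul_one, hint0] at h4
    have h5 : (μinf S).toReal = 0 := le_antisymm h4 ENNReal.toReal_nonneg
    rcases (ENNReal.toReal_eq_zero_iff _).mp h5 with h | h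
    · exact h
    · exact absurd h (measure_ne_top _ _)
  have hμdiag : μinf {p : Zsp N × Zsp N | p.1 ≠ p.2} = 0 := by
    refine measure_mono_null (t := ⋃ n : ℕ, {p : Zsp N × Zsp N | 1 / (n + 1) ≤ ‖p.1 - p.2‖})
      ?_ (measure_iUnion_null fun n => hkey _ (by positivity))
    intro p hp
    have hpos : 0 < ‖p.1 - p.2‖ := norm_pos_iff.mpr (sub_ne_zero.mpr hp)
    obtain ⟨n, hn⟩ := exists_nat_one_div_lt hpos
    exact Set.mem_iUnion.mpr ⟨n, hn.le⟩
  -- Step 2: the first-marginal equality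
  have h3 : ν.map Prod.fst = μinf.map Prod.fst := by
    haveI : IsFiniteMeasure (ν.map Prod.fst) := Measure.isFiniteMeasure_map ν _
    haveI : IsFiniteMeasure (μinf.map Prod.fst) := Measure.isFiniteMeasure_map μinf _
    apply ext_of_forall_lintegral_eq_of_IsFiniteMeasure
    intro f
    have hf1 := BoundedContinuousFunction.lintegral_lt_top_of_nnreal (ν.map Prod.fst) f
    have hf2 := BoundedContinuousFunction.lintegral_lt_top_of_nnreal (μinf.map Prod.fst) f
    apply (ENNReal.toReal_eq_toReal_iff' hf1.ne hf2.ne).mp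
    rw [BoundedContinuousFunction.toReal_lintegral_coe_eq_integral,
      BoundedContinuousFunction.toReal_lintegral_coe_eq_integral]
    set fr : BoundedContinuousFunction (Zsp N) ℝ :=
      ⟨⟨fun y => (f y : ℝ), NNReal.continuous_coe.comp f.continuous⟩, by
        obtain ⟨C, hC⟩ := f.map_bounded'
        exact ⟨C, fun x y => hC x y⟩⟩ with hfr
    have hsm1 : AEStronglyMeasurable (fun y : Zsp N => (f y : ℝ)) (ν.map Prod.fst) :=
      (NNReal.continuous_coe.comp f.continuous).aestronglyMeasurable
    have hsm2 : AEStronglyMeasurable (fun y : Zsp N => (f y : ℝ)) (μinf.map Prod.fst) :=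
      (NNReal.continuous_coe.comp f.continuous).aestronglyMeasurable
    rw [integral_map measurable_fst.aemeasurable hsm1,
      integral_map measurable_fst.aemeasurable hsm2]
    exact hνtest fr
  -- Step 3: conclude
  rw [diag_rep ν hνdiag, diag_rep μinf hμdiag, h3]
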